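/- arXiv:2101.10060 — 5 statements merged into one kernel-verified Lean document; each statement's English description precedes it below -/
import Mathlib

section
/- Let n ≥ 2 and r > 0 with r² ∈ ℕ. Let Q_r = {q ∈ ℤ^n : ‖q‖² = r² and q is lexicographically positive (its first nonzero coordinate is positive)}. Then Σ_{q ∈ Q_r} q qᵀ = β(r) I_n, where β(r) = (r² / n) · |Q_r|. -/
/-- `q` is lexicographically positive: its first nonzero coordinate is positive. -/
def LexPos {n : ℕ} (q : Fin n → ℤ) : Prop :=
  ∃ i : Fin n, 0 < q i ∧ ∀ j : Fin n, j < i → q j = 0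

/-!
`Q` and `-Q` partition the nonzero lattice points of the sphere `‖q‖² = m`, and `q qᵀ` is even in
`q`, so the sum over `Q` is half the sum over this punctured sphere. The punctured sphere is
invariant under changing the sign of one coordinate, which makes the off-diagonal sums
`∑ q_k q_j` vanish, and under swapping two coordinates, which makes the diagonal sums `∑ q_k²`
all equal; adding them up over `k` gives `m` times the number of points.
-/

open Finset Function Matrix
open scoped Pointwise

theorem lexPos_iff_pos_toLex {n : ℕ} {q : Fin n → ℤ} : LexPos q ↔ 0 < toLex q :=
  ⟨fun ⟨i, hi, h0⟩ => ⟨i, fun j hj => (h0 j hj).symm, hi⟩,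
    fun ⟨i, h0, hi⟩ => ⟨i, hi, fun j hj => (h0 j hj).symm⟩⟩

theorem LexPos.not_neg {n : ℕ} {q : Fin n → ℤ} (hq : LexPos q) : ¬ LexPos (-q) := by
  rw [lexPos_iff_pos_toLex] at hq ⊢
  rw [toLex_neg, neg_pos]
  exact hq.asymm

theorem LexPos.or_neg {n : ℕ} {q : Fin n → ℤ} (hq : q ≠ 0) : LexPos q ∨ LexPos (-q) := by
  simp only [lexPos_iff_pos_toLex, toLex_neg, neg_pos]
  exact (lt_or_gt_of_ne (a := toLex q) (b := 0) hq).symm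

theorem Finset.disjoint_neg_of_forall_lexPos {n : ℕ} {Q : Finset (Fin n → ℤ)}
    (hQ : ∀ q ∈ Q, LexPos q) : Disjoint Q (-Q) := by
  rw [disjoint_left]
  intro q hq hq'
  obtain ⟨p, hp, rfl⟩ := mem_neg.1 hq'
  exact (hQ p hp).not_neg (hQ _ hq)

theorem Finset.mem_union_neg_iff_of_lexPos {n : ℕ} {P : (Fin n → ℤ) → Prop}
    (hP : ∀ q, P (-q) ↔ P q) {Q : Finset (Fin n → ℤ)} (hQ : ∀ q, q ∈ Q ↔ P q ∧ LexPos q)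
    {q : Fin n → ℤ} : q ∈ Q ∪ -Q ↔ P q ∧ q ≠ 0 := by
  have hne {p : Fin n → ℤ} (hp : LexPos p) : p ≠ 0 := by
    rintro rfl
    exact hp.not_neg (by simpa using hp)
  rw [mem_union, mem_neg, hQ]
  constructor
  · rintro (⟨hq, hlex⟩ | ⟨p, hp, rfl⟩)
    · exact ⟨hq, hne hlex⟩
    · obtain ⟨hp, hlex⟩ := (hQ p).1 hp
      exact ⟨(hP p).2 hp, neg_ne_zero.2 (hne hlex)⟩
  · rintro ⟨hq, hq0⟩
    refine (LexPos.or_neg hq0).imp (fun hlex => ⟨hq, hlex⟩) fun hlex => ⟨-q, ?_, neg_neg q⟩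
    exact (hQ _).2 ⟨(hP q).2 hq, hlex⟩

theorem Finset.sum_union_neg {G M : Type*} [DecidableEq G] [InvolutiveNeg G] [AddCommMonoid M]
    {s : Finset G} (hs : Disjoint s (-s)) {f : G → M} (hf : ∀ x, f (-x) = f x) :
    ∑ x ∈ s ∪ -s, f x = 2 • ∑ x ∈ s, f x := by
  rw [sum_union hs, sum_neg_index, two_nsmul]
  simp only [hf]

section Isotropy

variable {ι R : Type*}

theorem Finset.sum_apply_comp_swap [DecidableEq ι] {M : Type*} [AddCommMonoid M]
    {S : Finset (ι → R)} (f : R → M) {k j : ι} (hS : ∀ q ∈ S, q ∘ Equiv.swap k j ∈ S) :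
    ∑ q ∈ S, f (q k) = ∑ q ∈ S, f (q j) := by
  have hinv (q : ι → R) : (q ∘ Equiv.swap k j) ∘ Equiv.swap k j = q := by
    ext i
    simp
  exact sum_nbij' (· ∘ Equiv.swap k j) (· ∘ Equiv.swap k j) hS hS
    (fun q _ => hinv q) (fun q _ => hinv q) (fun q _ => by simp)

theorem Finset.sum_mul_eq_zero_of_update_neg_mem [DecidableEq ι] [Ring R] [IsAddTorsionFree R]
    {S : Finset (ι → R)} {k j : ι} (hkj : k ≠ j) (hS : ∀ q ∈ S, update q k (-q k) ∈ S) :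
    ∑ q ∈ S, q k * q j = 0 := by
  set σ : (ι → R) → ι → R := fun q => update q k (-q k)
  have hinv (q : ι → R) : σ (σ q) = q := by
    ext i
    rcases eq_or_ne i k with rfl | hi <;> simp [σ, *]
  refine self_eq_neg.mp ?_
  calc ∑ q ∈ S, q k * q j = ∑ q ∈ S, σ q k * σ q j :=
        (sum_nbij' σ σ hS hS (fun q _ => hinv q) (fun q _ => hinv q) (fun q _ => rfl)).symm
    _ = -∑ q ∈ S, q k * q j := by simp [σ, update_of_ne hkj.symm]

theorem sum_sq_update_neg [Fintype ι] [DecidableEq ι] [Ring R] (q : ι → R) (k : ι) :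
    ∑ i, update q k (-q k) i ^ 2 = ∑ i, q i ^ 2 :=
  sum_congr rfl fun i _ => by rcases eq_or_ne i k with rfl | hi <;> simp [*]

theorem sum_sq_eq_zero_iff [Fintype ι] [Ring R] [LinearOrder R] [IsStrictOrderedRing R]
    {q : ι → R} : ∑ i, q i ^ 2 = 0 ↔ q = 0 := by
  simp [sq, sum_mul_self_eq_zero_iff, funext_iff]

theorem Finset.card_smul_sum_vecMulVec_self [Fintype ι] [DecidableEq ι] [CommRing R]
    [IsAddTorsionFree R] {S : Finset (ι → R)} {m : R} (hnorm : ∀ q ∈ S, ∑ i, q i ^ 2 = m)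
    (hflip : ∀ q ∈ S, ∀ k, update q k (-q k) ∈ S)
    (hswap : ∀ q ∈ S, ∀ k j, q ∘ Equiv.swap k j ∈ S) :
    Fintype.card ι • ∑ q ∈ S, vecMulVec q q = (#S • m) • (1 : Matrix ι ι R) := by
  ext k j
  simp only [Matrix.smul_apply, Matrix.sum_apply, vecMulVec_apply, one_apply, smul_eq_mul]
  rcases eq_or_ne k j with rfl | hkj
  · have hdiag (i : ι) : ∑ q ∈ S, q i ^ 2 = ∑ q ∈ S, q k ^ 2 :=
      sum_apply_comp_swap (· ^ 2) fun q hq => hswap q hq i k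
    calc Fintype.card ι • ∑ q ∈ S, q k * q k = ∑ i, ∑ q ∈ S, q i ^ 2 := by
          rw [sum_congr rfl fun i _ => hdiag i, sum_const, card_univ]
          simp only [sq]
      _ = ∑ q ∈ S, ∑ i, q i ^ 2 := sum_comm
      _ = (#S • m) * if k = k then 1 else 0 := by rw [sum_congr rfl hnorm, sum_const]; simp
  · rw [sum_mul_eq_zero_of_update_neg_mem hkj (fun q hq => hflip q hq k), if_neg hkj]
    simp

theorem Finset.card_smul_sum_vecMulVec_self_of_mem_iff [Fintype ι] [DecidableEq ι] [CommRing R]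
    [LinearOrder R] [IsStrictOrderedRing R] {S : Finset (ι → R)} {m : R}
    (hS : ∀ q, q ∈ S ↔ ∑ i, q i ^ 2 = m ∧ q ≠ 0) :
    Fintype.card ι • ∑ q ∈ S, vecMulVec q q = (#S • m) • (1 : Matrix ι ι R) := by
  have hmem {g : (ι → R) → ι → R} (hg : ∀ q, ∑ i, g q i ^ 2 = ∑ i, q i ^ 2) :
      ∀ q ∈ S, g q ∈ S := by
    intro q hq
    rw [hS] at hq ⊢
    rwa [Ne, ← sum_sq_eq_zero_iff, hg, sum_sq_eq_zero_iff]
  exact card_smul_sum_vecMulVec_self (fun q hq => ((hS q).1 hq).1)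
    (fun q hq k => hmem (fun q => sum_sq_update_neg q k) q hq)
    (fun q hq k j => hmem (fun q => Equiv.sum_comp (Equiv.swap k j) (q · ^ 2)) q hq)

end Isotropy

theorem sum_outer_products_isotropic_general
    (n : ℕ) (m : ℕ)
    (Q : Finset (Fin n → ℤ))
    (hQ : ∀ q : Fin n → ℤ, q ∈ Q ↔ (∑ i, (q i) ^ 2 = (m : ℤ)) ∧ LexPos q) :
    ∑ q ∈ Q, (Matrix.of fun k j : Fin n => ((q k : ℝ) * (q j : ℝ)))
      = (((m : ℝ) / n) * Q.card) • (1 : Matrix (Fin n) (Fin n) ℝ) := by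
  classical
  have hdisj : Disjoint Q (-Q) := disjoint_neg_of_forall_lexPos fun q hq => ((hQ q).1 hq).2
  have key := card_smul_sum_vecMulVec_self_of_mem_iff (S := Q ∪ -Q) (m := (m : ℤ))
    fun q => mem_union_neg_iff_of_lexPos (by simp) hQ
  rw [sum_union_neg hdisj fun q => by simp, card_union_of_disjoint hdisj, card_neg] at key
  ext k j
  have hn : (n : ℝ) ≠ 0 := Nat.cast_ne_zero.2 k.pos.ne'
  have hkj := congrArg (Int.cast : ℤ → ℝ) (congrFun₂ key k j)
  simp only [Matrix.smul_apply, Matrix.sum_apply, vecMulVec_apply, one_apply] at hkj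
  simp only [Matrix.smul_apply, Matrix.sum_apply, of_apply, one_apply, smul_eq_mul]
  push_cast [nsmul_eq_mul, smul_eq_mul, Fintype.card_fin] at hkj
  split_ifs at hkj ⊢ <;> field_simp <;> linarith

theorem sum_outer_products_isotropic
    (n : ℕ) (hn : 2 ≤ n) (r : ℝ) (hr : 0 < r) (m : ℕ) (hm : r ^ 2 = (m : ℝ))
    (Q : Finset (Fin n → ℤ))
    (hQ : ∀ q : Fin n → ℤ, q ∈ Q ↔ (∑ i, (q i) ^ 2 = (m : ℤ)) ∧ LexPos q) :
    ∑ q ∈ Q, (Matrix.of fun k j : Fin n => ((q k : ℝ) * (q j : ℝ)))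
      = (((m : ℝ) / n) * Q.card) • (1 : Matrix (Fin n) (Fin n) ℝ) :=
  sum_outer_products_isotropic_general n m Q hQ
end

section
/- Let φ : ℝ^n → ℝ be a smooth scalar field, x(M) a smooth map with Jacobian ∂x/∂M, and q ∈ ℤ^n a fixed vector, h = (∂x/∂M) q. Then [(∂/∂M)(φ h) q]ᵀ = ∇ · (φ h hᵀ) − φ (∇ · h) hᵀ, where ∂/∂M = (∂/∂x)(∂x/∂M) by the chain rule and ∇ is the row vector of x-derivatives. -/
theorem index_derivative_to_divergence_identity
    (n : ℕ) (φ : (Fin n → ℝ) → ℝ) (A : (Fin n → ℝ) → Matrix (Fin n) (Fin n) ℝ)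
    (hφ : ContDiff ℝ (⊤ : ℕ∞) φ) (hA : ∀ i j : Fin n, ContDiff ℝ (⊤ : ℕ∞) (fun y => A y i j))
    (q : Fin n → ℤ)
    (h : (Fin n → ℝ) → (Fin n → ℝ))
    (hdef : ∀ y, h y = (A y).mulVec (fun i => (q i : ℝ)))
    (x : Fin n → ℝ) (j : Fin n) :
    fderiv ℝ (fun y => φ y * h y j) x (h x)
      = (∑ i : Fin n, fderiv ℝ (fun y => φ y * h y i * h y j) x (Pi.single i 1))
        - φ x * (∑ i : Fin n, fderiv ℝ (fun y => h y i) x (Pi.single i 1)) * h x j := by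
  have hq : ∀ i, ContDiff ℝ (⊤ : ℕ∞) (fun y => h y i) := by
    intro i
    have heq : (fun y => h y i) = fun y => ∑ k, A y i k * (q k : ℝ) := by
      funext y; rw [hdef]; simp [Matrix.mulVec, dotProduct]
    rw [heq]
    exact ContDiff.sum fun k _ => (hA i k).mul contDiff_const
  have hφd : DifferentiableAt ℝ φ x := hφ.differentiable (by simp) x
  have hhd : ∀ i, DifferentiableAt ℝ (fun y => h y i) x :=
    fun i => (hq i).differentiable (by simp) x
  have hφj : DifferentiableAt ℝ (fun y => φ y * h y j) x := hφd.mul (hhd j)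
  have key : ∀ i, fderiv ℝ (fun y => φ y * h y i * h y j) x (Pi.single i 1)
      = h x i * fderiv ℝ (fun y => φ y * h y j) x (Pi.single i 1)
        + (φ x * h x j) * fderiv ℝ (fun y => h y i) x (Pi.single i 1) := by
    intro i
    have heq : (fun y => φ y * h y i * h y j) = fun y => (φ y * h y j) * h y i := by
      funext y; ring
    rw [heq, fderiv_fun_mul hφj (hhd i)]
    simp only [ContinuousLinearMap.add_apply, ContinuousLinearMap.smul_apply, smul_eq_mul]
    ring
  have hsum : h x = ∑ i : Fin n, h x i • (Pi.single i 1 : Fin n → ℝ) := by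
    funext k
    simp [Finset.sum_apply, Pi.single_apply, Finset.sum_ite_eq]
  have hL : fderiv ℝ (fun y => φ y * h y j) x (h x)
      = ∑ i : Fin n, h x i * fderiv ℝ (fun y => φ y * h y j) x (Pi.single i 1) := by
    conv_lhs => rw [hsum]
    rw [map_sum]
    simp
  simp only [key]
  rw [hL, Finset.sum_add_distrib, ← Finset.mul_sum]
  ring
end

section
/- Let M : ℝ^n × ℝ → ℝ^n be smooth with Jacobian J(x,t) = ∂M/∂x, and let u(x,t) be a smooth vector field. If J satisfies ∂J/∂t = −∂(Ju)/∂x (componentwise: ∂J_{ik}/∂t = −Σ_j (∂J_{ik}/∂x_j) u_j − Σ_j J_{ij} ∂u_j/∂x_k), then det J satisfies the continuity equation ∂(det J)/∂t = −∇ · ((det J) u). -/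
open Matrix

/-- The determinant as a continuous multilinear map in the rows. -/
noncomputable def detCM (n : ℕ) : ContinuousMultilinearMap ℝ (fun _ : Fin n => Fin n → ℝ) ℝ :=
  { Matrix.detRowAlternating.toMultilinearMap with
    cont := by
      have h : Continuous fun m : Fin n → Fin n → ℝ => (Matrix.of m).det :=
        Continuous.matrix_det continuous_id
      exact h }

lemma det_hasFDerivAt {n : ℕ} (A : Fin n → Fin n → ℝ) :
    HasFDerivAt (fun m : Fin n → Fin n → ℝ => (Matrix.of m).det) ((detCM n).linearDeriv A) A :=
  (detCM n).hasFDerivAt A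

lemma linearDeriv_det_apply {n : ℕ} (A B : Fin n → Fin n → ℝ) :
    (detCM n).linearDeriv A B
      = ∑ i, ∑ k, (Matrix.of A).adjugate k i * B i k := by
  rw [ContinuousMultilinearMap.linearDeriv_apply]
  congr 1
  ext i
  have h1 : detCM n (Function.update A i (B i)) = ((Matrix.of A).updateRow i (B i)).det := rfl
  rw [h1, ← Matrix.cramer_transpose_apply, Matrix.cramer_eq_adjugate_mulVec]
  simp [Matrix.mulVec, dotProduct, ← Matrix.adjugate_transpose, Matrix.transpose_apply]

lemma trace_aux {n : ℕ} (A G : Matrix (Fin n) (Fin n) ℝ) :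
    ∑ i, ∑ k, A.adjugate k i * (∑ j, A i j * G j k) = ∑ j : Fin n, A.det * G j j := by
  have h : ∀ k j, ∑ i, A.adjugate k i * A i j
      = A.det * (1 : Matrix (Fin n) (Fin n) ℝ) k j := by
    intro k j
    have := congrFun (congrFun (Matrix.adjugate_mul A) k) j
    simpa [Matrix.mul_apply, Matrix.smul_apply, smul_eq_mul] using this
  rw [Finset.sum_comm]
  calc ∑ k, ∑ i, A.adjugate k i * (∑ j, A i j * G j k)
      = ∑ k, ∑ j, (∑ i, A.adjugate k i * A i j) * G j k := by
        refine Finset.sum_congr rfl fun k _ => ?_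
        simp_rw [Finset.mul_sum, Finset.sum_mul]
        rw [Finset.sum_comm]
        exact Finset.sum_congr rfl fun i _ => Finset.sum_congr rfl fun j _ => by ring
    _ = ∑ k, ∑ j, (A.det * (1 : Matrix (Fin n) (Fin n) ℝ) k j) * G j k := by
        simp_rw [h]
    _ = ∑ j : Fin n, A.det * G j j := by
        simp [Matrix.one_apply, mul_comm]

lemma sum_rearrange {n : ℕ} (f : Fin n → Fin n → Fin n → ℝ) (v : Fin n → ℝ) :
    ∑ i, ∑ k, ∑ j, f i k j * v j = ∑ j, (∑ i, ∑ k, f i k j) * v j := by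
  simp_rw [Finset.sum_mul]
  calc ∑ i, ∑ k, ∑ j, f i k j * v j
      = ∑ i, ∑ j, ∑ k, f i k j * v j :=
        Finset.sum_congr rfl fun i _ => Finset.sum_comm
    _ = ∑ j, ∑ i, ∑ k, f i k j * v j := Finset.sum_comm

theorem jacobian_determinant_continuity_equation
    (n : ℕ)
    (M : (Fin n → ℝ) → ℝ → (Fin n → ℝ))
    (u : (Fin n → ℝ) → ℝ → (Fin n → ℝ))
    (hM : ContDiff ℝ (⊤ : ℕ∞) (fun p : (Fin n → ℝ) × ℝ => M p.1 p.2))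
    (hu : ContDiff ℝ (⊤ : ℕ∞) (fun p : (Fin n → ℝ) × ℝ => u p.1 p.2))
    (J : (Fin n → ℝ) → ℝ → Matrix (Fin n) (Fin n) ℝ)
    (hJ : ∀ x t i k, J x t i k = fderiv ℝ (fun y => M y t i) x (Pi.single k 1))
    (hdyn : ∀ (x : Fin n → ℝ) (t : ℝ) (i k : Fin n),
      deriv (fun τ => J x τ i k) t
        = -(∑ j : Fin n, fderiv ℝ (fun y => J y t i k) x (Pi.single j 1) * u x t j)
          - ∑ j : Fin n, J x t i j * fderiv ℝ (fun y => u y t j) x (Pi.single k 1)) :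
    ∀ (x : Fin n → ℝ) (t : ℝ),
      deriv (fun τ => (J x τ).det) t
        = -∑ j : Fin n, fderiv ℝ (fun y => (J y t).det * u y t j) x (Pi.single j 1) := by
  intro x t
  -- smoothness of the entries of J
  have hJc : ∀ i k, ContDiff ℝ (⊤ : ℕ∞) (fun p : (Fin n → ℝ) × ℝ => J p.1 p.2 i k) := by
    intro i k
    have hMi : ContDiff ℝ (⊤ : ℕ∞) (fun p : (Fin n → ℝ) × ℝ => M p.1 p.2 i) :=
      (contDiff_pi.mp hM) i
    have huncurry : ContDiff ℝ (⊤ : ℕ∞)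
        (Function.uncurry fun (p : (Fin n → ℝ) × ℝ) (y : Fin n → ℝ) => M y p.2 i) :=
      hMi.comp (contDiff_snd.prodMk (contDiff_snd.comp contDiff_fst))
    have hfd := huncurry.fderiv (n := ((⊤ : ℕ∞) : WithTop ℕ∞)) contDiff_fst (by exact_mod_cast le_top)
    have h2 := hfd.clm_apply (contDiff_const (c := (Pi.single k 1 : Fin n → ℝ)))
    convert h2 using 2 with p
    exact hJ p.1 p.2 i k
  have huc : ∀ j, ContDiff ℝ (⊤ : ℕ∞) (fun p : (Fin n → ℝ) × ℝ => u p.1 p.2 j) :=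
    fun j => (contDiff_pi.mp hu) j
  -- differentiability in t and x of the entries
  have hJt : ∀ i k, DifferentiableAt ℝ (fun τ => J x τ i k) t := by
    intro i k
    have : ContDiff ℝ (⊤ : ℕ∞) (fun τ : ℝ => J x τ i k) :=
      (hJc i k).comp (contDiff_const.prodMk contDiff_id)
    exact (this.differentiable (by simp)).differentiableAt
  have hJx : ∀ i k, DifferentiableAt ℝ (fun y => J y t i k) x := by
    intro i k
    have : ContDiff ℝ (⊤ : ℕ∞) (fun y : Fin n → ℝ => J y t i k) :=
      (hJc i k).comp (contDiff_id.prodMk contDiff_const)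
    exact (this.differentiable (by simp)).differentiableAt
  have hux : ∀ j, DifferentiableAt ℝ (fun y => u y t j) x := by
    intro j
    have : ContDiff ℝ (⊤ : ℕ∞) (fun y : Fin n → ℝ => u y t j) :=
      (huc j).comp (contDiff_id.prodMk contDiff_const)
    exact (this.differentiable (by simp)).differentiableAt
  set A := J x t with hA
  -- time derivative of the matrix
  set J't : Fin n → Fin n → ℝ := fun i k => deriv (fun τ => J x τ i k) t with hJ't
  have hJt' : HasDerivAt (fun τ (i k : Fin n) => J x τ i k) J't t := by
    apply hasDerivAt_pi.2
    intro i
    apply hasDerivAt_pi.2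
    intro k
    exact (hJt i k).hasDerivAt
  have hLHS : deriv (fun τ => (J x τ).det) t
      = ∑ i, ∑ k, A.adjugate k i * J't i k := by
    have hcomp := (det_hasFDerivAt (J x t)).comp_hasDerivAt t hJt'
    have h2 : deriv (fun τ => (J x τ).det) t = ((detCM n).linearDeriv (J x t)) J't :=
      hcomp.deriv
    rw [h2]; refine (linearDeriv_det_apply _ _).trans ?_
    rfl
  -- space derivative of the matrix
  have hJxd : DifferentiableAt ℝ (fun y (i k : Fin n) => J y t i k) x := by
    apply differentiableAt_pi.2
    intro i
    apply differentiableAt_pi.2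
    intro k
    exact hJx i k
  set Jx' := fderiv ℝ (fun y (i k : Fin n) => J y t i k) x with hJx'
  have hJx'app : ∀ (v : Fin n → ℝ) i k,
      Jx' v i k = fderiv ℝ (fun y => J y t i k) x v := by
    intro v i k
    have h1 : Jx' = ContinuousLinearMap.pi fun i => fderiv ℝ (fun y => J y t i) x :=
      fderiv_pi fun i => differentiableAt_pi.2 fun k => hJx i k
    have h2 : ∀ i, fderiv ℝ (fun y => J y t i) x
        = ContinuousLinearMap.pi fun k => fderiv ℝ (fun y => J y t i k) x :=
      fun i => fderiv_pi fun k => hJx i k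
    rw [h1]
    simp [h2]
  have hdetx : HasFDerivAt (fun y => (J y t).det)
      (((detCM n).linearDeriv A).comp Jx') x :=
    (det_hasFDerivAt A).comp x hJxd.hasFDerivAt
  have hdetx' : ∀ j, fderiv ℝ (fun y => (J y t).det) x (Pi.single j 1)
      = ∑ i, ∑ k, A.adjugate k i
          * fderiv ℝ (fun y => J y t i k) x (Pi.single j 1) := by
    intro j
    rw [hdetx.fderiv]
    simp only [ContinuousLinearMap.comp_apply]
    refine (linearDeriv_det_apply _ _).trans ?_
    refine Finset.sum_congr rfl fun i _ => Finset.sum_congr rfl fun k _ => ?_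
    exact congrArg (fun z => A.adjugate k i * z) (hJx'app (Pi.single j 1) i k)
  -- right-hand side via the product rule
  have hRHS : ∀ j, fderiv ℝ (fun y => (J y t).det * u y t j) x (Pi.single j 1)
      = (∑ i, ∑ k, A.adjugate k i
            * fderiv ℝ (fun y => J y t i k) x (Pi.single j 1)) * u x t j
        + A.det * fderiv ℝ (fun y => u y t j) x (Pi.single j 1) := by
    intro j
    rw [fderiv_fun_mul hdetx.differentiableAt (hux j)]
    simp only [ContinuousLinearMap.add_apply, ContinuousLinearMap.smul_apply, smul_eq_mul]
    rw [hdetx' j]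
    ring
  -- put everything together
  rw [hLHS]
  have hsub : ∀ i k, J't i k
      = -(∑ j : Fin n, fderiv ℝ (fun y => J y t i k) x (Pi.single j 1) * u x t j)
        - ∑ j : Fin n, A i j * fderiv ℝ (fun y => u y t j) x (Pi.single k 1) :=
    fun i k => hdyn x t i k
  calc ∑ i, ∑ k, A.adjugate k i * J't i k
      = -(∑ j, (∑ i, ∑ k, A.adjugate k i
            * fderiv ℝ (fun y => J y t i k) x (Pi.single j 1)) * u x t j)
        - ∑ i, ∑ k, A.adjugate k i
            * (∑ j, A i j * fderiv ℝ (fun y => u y t j) x (Pi.single k 1)) := by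
        simp_rw [hsub, mul_sub, mul_neg, Finset.sum_sub_distrib, Finset.sum_neg_distrib]
        congr 1
        rw [neg_inj]
        rw [← sum_rearrange (fun i k j => A.adjugate k i
          * fderiv ℝ (fun y => J y t i k) x (Pi.single j 1)) (fun j => u x t j)]
        refine Finset.sum_congr rfl fun i _ => Finset.sum_congr rfl fun k _ => ?_
        rw [Finset.mul_sum]
        exact Finset.sum_congr rfl fun j _ => by ring
    _ = -(∑ j, (∑ i, ∑ k, A.adjugate k i
            * fderiv ℝ (fun y => J y t i k) x (Pi.single j 1)) * u x t j)
        - ∑ j : Fin n, A.det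
            * fderiv ℝ (fun y => u y t j) x (Pi.single j 1) := by
        have htr := trace_aux A
          (Matrix.of fun j' k' => fderiv ℝ (fun y => u y t j') x (Pi.single k' 1))
        simp only [Matrix.of_apply] at htr
        rw [htr]
    _ = -∑ j : Fin n, fderiv ℝ (fun y => (J y t).det * u y t j) x (Pi.single j 1) := by
        simp_rw [hRHS]
        rw [Finset.sum_add_distrib, neg_add]
        ring_nf
end

section
/- Let x(M) be a smooth map ℝ^n → ℝ^n whose Jacobian ∂x/∂M is isotropic at every point, i.e. ∂x/∂M = λ(x)·R(x) with λ > 0 scalar and R(x) a rotation matrix (equivalently (∂x/∂M)(∂x/∂M)ᵀ = λ² I), and let ρ = det(∂M/∂x) = λ^{−n}. Then ∇ · (ρ ∂x/∂M) (∂x/∂M)ᵀ = 0, where ∇ · applied to a matrix field is the row vector of columnwise divergences with respect to x. -/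
theorem isotropic_divergence_term_vanishes
    (n : ℕ) (hn : 2 ≤ n)
    (M : (Fin n → ℝ) → (Fin n → ℝ)) (hM : ContDiff ℝ (⊤ : ℕ∞) M)
    (l : (Fin n → ℝ) → ℝ) (hl : ContDiff ℝ (⊤ : ℕ∞) l) (hlpos : ∀ x, 0 < l x)
    (J : (Fin n → ℝ) → Matrix (Fin n) (Fin n) ℝ)
    (hJ : ∀ x i k, J x i k = fderiv ℝ (fun y => M y i) x (Pi.single k 1))
    -- isotropy: the columns of the Jacobian ∂M/∂x are orthogonal with common norm l
    (hiso : ∀ (x : Fin n → ℝ) (j k : Fin n),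
      ∑ i : Fin n, J x i j * J x i k = (l x) ^ 2 * (if j = k then 1 else 0))
    -- A = ∂x/∂M = λ⁻² (∂M/∂x)ᵀ, ρ = det(∂M/∂x) = λⁿ (isotropy)
    (A : (Fin n → ℝ) → Matrix (Fin n) (Fin n) ℝ)
    (hA : ∀ x, A x = ((l x) ^ 2)⁻¹ • (J x).transpose)
    (ρ : (Fin n → ℝ) → ℝ)
    (hρ : ∀ x, ρ x = (l x) ^ n) :
    ∀ (x : Fin n → ℝ) (k : Fin n),
      ∑ j : Fin n,
        (∑ i : Fin n, fderiv ℝ (fun y => ρ y * A y i j) x (Pi.single i 1)) * A x k j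
      = 0 := by
  intro x k
  set e : Fin n → (Fin n → ℝ) := fun i => Pi.single i 1 with he
  have hMc : ∀ j, ContDiff ℝ (⊤ : ℕ∞) (fun y => M y j) := fun j => contDiff_pi.mp hM j
  have hJfun : ∀ j i, (fun y => J y j i) = fun y => fderiv ℝ (fun z => M z j) y (e i) :=
    fun j i => funext fun y => hJ y j i
  have hJsm : ∀ j i, ContDiff ℝ (⊤ : ℕ∞) (fun y => J y j i) := by
    intro j i
    rw [hJfun]
    exact ((hMc j).fderiv_right (by simp)).clm_apply contDiff_const
  set J' : Fin n → Fin n → ((Fin n → ℝ) →L[ℝ] ℝ) :=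
    fun j i => fderiv ℝ (fun y => J y j i) x with hJ'
  have hJ'at : ∀ j i, HasFDerivAt (fun y => J y j i) (J' j i) x :=
    fun j i => ((hJsm j i).differentiable (by simp) x).hasFDerivAt
  set D : Fin n → Fin n → Fin n → ℝ := fun j i m => J' j i (e m) with hD
  set L' : (Fin n → ℝ) →L[ℝ] ℝ := fderiv ℝ l x with hL'
  have hlat : HasFDerivAt l L' x := ((hl.differentiable (by simp)) x).hasFDerivAt
  -- symmetry of second derivatives
  have hsymm : ∀ j i m, D j i m = D j m i := by
    intro j i m
    have hexp : ∀ a b : Fin n, D j a b = fderiv ℝ (fderiv ℝ (fun z => M z j)) x (e b) (e a) := by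
      intro a b
      show fderiv ℝ (fun y => J y j a) x (e b) = _
      rw [hJfun j a,
        fderiv_clm_apply (((hMc j).fderiv_right (m := (⊤ : ℕ∞)) (by simp)).differentiable (by simp) x)
          (differentiableAt_const (e a))]
      simp
    rw [hexp, hexp]
    exact ((hMc j).contDiffAt.isSymmSndFDerivAt (by rw [minSmoothness_of_isRCLikeNormedField]; exact le_trans (by norm_num : (2 : WithTop ℕ∞) ≤ ((2 : ℕ∞) : WithTop ℕ∞)) (WithTop.coe_le_coe.mpr le_top))).eq (e m) (e i)
  -- differentiated isotropy relation
  have key : ∀ i k' m, ∑ j, (J x j i * D j k' m + J x j k' * D j i m)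
      = (if i = k' then 1 else 0) * (2 * l x * L' (e m)) := by
    intro i k' m
    have h1 : HasFDerivAt (fun y => ∑ j, J y j i * J y j k')
        (∑ j, (J x j i • J' j k' + J x j k' • J' j i)) x :=
      HasFDerivAt.fun_sum (fun j _ => (hJ'at j i).mul (hJ'at j k'))
    have h2 : HasFDerivAt (fun y => (l y) ^ 2 * (if i = k' then (1:ℝ) else 0))
        ((if i = k' then (1:ℝ) else 0) • (((2:ℝ) * l x ^ (2-1)) • L')) x := by
      exact ((hasDerivAt_pow 2 (l x)).comp_hasFDerivAt x hlat).mul_const _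
    have heq : (fun y => ∑ j, J y j i * J y j k')
        = fun y => (l y) ^ 2 * (if i = k' then (1:ℝ) else 0) :=
      funext fun y => hiso y i k'
    rw [heq] at h1
    have := h1.unique h2
    have happ := congrArg (fun (T : (Fin n → ℝ) →L[ℝ] ℝ) => T (e m)) this
    simp only [ContinuousLinearMap.sum_apply, ContinuousLinearMap.add_apply,
      ContinuousLinearMap.smul_apply, smul_eq_mul, pow_one] at happ
    rw [happ]
    ring_nf
  -- step (b): ∀ i, ∑ j, J x j i * D j i k = l x * L' (e k)
  have hb : ∀ i, ∑ j, J x j i * D j i k = l x * L' (e k) := by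
    intro i
    have h := key i i k
    simp only [eq_self_iff_true, if_true, one_mul] at h
    have h2 : ∑ j, (J x j i * D j i k + J x j i * D j i k)
        = 2 * ∑ j, J x j i * D j i k := by
      rw [Finset.mul_sum]
      apply Finset.sum_congr rfl
      intro j _
      ring
    rw [h2] at h
    linarith
  -- step (a) + (b): main sum identity
  have sumD : ∑ i, ∑ j, D j i i * J x j k = (2 - (n:ℝ)) * (l x * L' (e k)) := by
    have ha : ∑ i, ∑ j, (J x j i * D j k i + J x j k * D j i i)
        = 2 * l x * L' (e k) := by
      rw [Finset.sum_congr rfl (fun i _ => key i k i)]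
      simp [Finset.sum_ite_eq', mul_comm, mul_assoc]
    have ha' : (∑ i, ∑ j, J x j i * D j k i) + ∑ i, ∑ j, J x j k * D j i i
        = 2 * l x * L' (e k) := by
      rw [← ha, ← Finset.sum_add_distrib]
      exact Finset.sum_congr rfl fun i _ => (Finset.sum_add_distrib).symm
    have hfirst : ∑ i, ∑ j, J x j i * D j k i = (n:ℝ) * (l x * L' (e k)) := by
      have : ∀ i, ∑ j, J x j i * D j k i = l x * L' (e k) := by
        intro i
        rw [← hb i]
        exact Finset.sum_congr rfl fun j _ => by rw [hsymm j k i]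
      rw [Finset.sum_congr rfl fun i _ => this i]
      simp [Finset.sum_const, Finset.card_univ, mul_comm]
    have : ∑ i, ∑ j, J x j k * D j i i = 2 * l x * L' (e k) - (n:ℝ) * (l x * L' (e k)) := by
      linarith [ha', hfirst]
    calc ∑ i, ∑ j, D j i i * J x j k = ∑ i, ∑ j, J x j k * D j i i :=
          Finset.sum_congr rfl fun i _ => Finset.sum_congr rfl fun j _ => mul_comm _ _
      _ = 2 * l x * L' (e k) - (n:ℝ) * (l x * L' (e k)) := this
      _ = (2 - (n:ℝ)) * (l x * L' (e k)) := by ring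
  -- rewrite the integrand
  have hlne : ∀ y, l y ≠ 0 := fun y => (hlpos y).ne'
  have hfun : ∀ i j, (fun y => ρ y * A y i j) = fun y => l y ^ (n-2) * J y j i := by
    intro i j
    funext y
    rw [hρ, hA]
    have h1 : (((l y) ^ 2)⁻¹ • (J y).transpose) i j = ((l y) ^ 2)⁻¹ * J y j i := by
      simp [Matrix.smul_apply, Matrix.transpose_apply, smul_eq_mul]
    rw [h1]
    have h2 : l y ^ n = l y ^ (n-2) * l y ^ 2 := by
      rw [← pow_add]; congr 1; omega
    rw [h2, mul_assoc, ← mul_assoc (l y ^ 2), mul_inv_cancel₀ (pow_ne_zero 2 (hlne y)), one_mul]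
  -- derivative of the integrand
  have hder : ∀ i j, fderiv ℝ (fun y => ρ y * A y i j) x (e i)
      = l x ^ (n-2) * D j i i + J x j i * (((n-2:ℕ):ℝ) * l x ^ (n-2-1) * L' (e i)) := by
    intro i j
    have hp : HasFDerivAt (fun y => l y ^ (n-2))
        ((((n-2:ℕ):ℝ) * l x ^ (n-2-1)) • L') x :=
      (hasDerivAt_pow (n-2) (l x)).comp_hasFDerivAt x hlat
    have hm : HasFDerivAt (fun y => l y ^ (n-2) * J y j i)
        (l x ^ (n-2) • J' j i + J x j i • ((((n-2:ℕ):ℝ) * l x ^ (n-2-1)) • L')) x :=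
      hp.mul (hJ'at j i)
    rw [hfun i j, hm.fderiv]
    simp [ContinuousLinearMap.add_apply, ContinuousLinearMap.smul_apply, smul_eq_mul,
      mul_assoc]
    exact Or.inl rfl
  -- entries of A at x
  have hAx : ∀ j, A x k j = (l x ^ 2)⁻¹ * J x j k := by
    intro j
    rw [hA]
    simp [Matrix.smul_apply, Matrix.transpose_apply, smul_eq_mul]
  -- assemble
  have hG : ∀ j, (∑ i, fderiv ℝ (fun y => ρ y * A y i j) x (e i))
      = l x ^ (n-2) * (∑ i, D j i i)
        + ((n-2:ℕ):ℝ) * l x ^ (n-2-1) * (∑ i, J x j i * L' (e i)) := by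
    intro j
    rw [Finset.sum_congr rfl fun i _ => hder i j]
    rw [Finset.sum_add_distrib, Finset.mul_sum, Finset.mul_sum]
    congr 1
    apply Finset.sum_congr rfl
    intro i _
    ring
  rw [Finset.sum_congr rfl fun j _ => by rw [hG j, hAx j]]
  have hsum1 : ∑ j, (∑ i, D j i i) * J x j k = (2 - (n:ℝ)) * (l x * L' (e k)) := by
    rw [← sumD, Finset.sum_comm]
    apply Finset.sum_congr rfl
    intro j _
    rw [Finset.sum_mul]
  have hsum2 : ∑ j, (∑ i, J x j i * L' (e i)) * J x j k = l x ^ 2 * L' (e k) := by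
    have : ∀ j, (∑ i, J x j i * L' (e i)) * J x j k
        = ∑ i, L' (e i) * (J x j i * J x j k) := by
      intro j
      rw [Finset.sum_mul]
      apply Finset.sum_congr rfl
      intro i _
      ring
    rw [Finset.sum_congr rfl fun j _ => this j, Finset.sum_comm]
    have : ∀ i, ∑ j, L' (e i) * (J x j i * J x j k)
        = L' (e i) * (l x ^ 2 * (if i = k then 1 else 0)) := by
      intro i
      rw [← Finset.mul_sum, hiso x i k]
    rw [Finset.sum_congr rfl fun i _ => this i]
    simp [Finset.sum_ite_eq', mul_comm, mul_assoc]
  -- final algebra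
  have hexpand : ∑ j, (l x ^ (n-2) * (∑ i, D j i i)
        + ((n-2:ℕ):ℝ) * l x ^ (n-2-1) * (∑ i, J x j i * L' (e i)))
        * ((l x ^ 2)⁻¹ * J x j k)
      = l x ^ (n-2) * (l x ^ 2)⁻¹ * (∑ j, (∑ i, D j i i) * J x j k)
        + ((n-2:ℕ):ℝ) * l x ^ (n-2-1) * (l x ^ 2)⁻¹
          * (∑ j, (∑ i, J x j i * L' (e i)) * J x j k) := by
    rw [Finset.mul_sum, Finset.mul_sum, ← Finset.sum_add_distrib]
    apply Finset.sum_congr rfl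
    intro j _
    ring
  rw [hexpand, hsum1, hsum2]
  have hl2 : (l x ^ 2)⁻¹ * l x ^ 2 = 1 := inv_mul_cancel₀ (pow_ne_zero 2 (hlne x))
  rcases eq_or_lt_of_le hn with h2 | h3
  · -- n = 2
    have : n - 2 = 0 := by omega
    rw [this]
    have hn2 : ((0:ℕ):ℝ) = 0 := by norm_num
    have : (2 - (n:ℝ)) = 0 := by rw [← h2]; norm_num
    rw [this]
    simp
  · -- n ≥ 3
    have hcast : ((n-2:ℕ):ℝ) = (n:ℝ) - 2 := by
      push_cast [Nat.cast_sub hn]; ring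
    have hpow : l x ^ (n-2) = l x ^ (n-2-1) * l x := by
      rw [← pow_succ]; congr 1; omega
    rw [hcast, hpow]
    have h2n : (2 - (n:ℝ)) = -((n:ℝ) - 2) := by ring
    rw [h2n]
    field_simp
    ring
end

section
/- Let M : ℝ^n → ℝ^n be smooth with orthogonality relations (∂M/∂x_j)ᵀ(∂M/∂x_k) = λ² δ_{jk} for a smooth positive scalar field λ. Then for every j, Σ_{k=1}^n (∂²M/∂x_k²)ᵀ (∂M/∂x_j) = (2 − n) λ ∂λ/∂x_j. -/
private lemma dir_smooth {n : ℕ} (f : (Fin n → ℝ) → ℝ) (hf : ContDiff ℝ (⊤ : ℕ∞) f)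
    (v : Fin n → ℝ) : ContDiff ℝ (⊤ : ℕ∞) (fun x => fderiv ℝ f x v) :=
  (hf.fderiv_right (by simp)).clm_apply contDiff_const

private lemma swap_second {n : ℕ} (f : (Fin n → ℝ) → ℝ) (hf : ContDiff ℝ (⊤ : ℕ∞) f)
    (x u v : Fin n → ℝ) :
    fderiv ℝ (fun y => fderiv ℝ f y u) x v = fderiv ℝ (fun y => fderiv ℝ f y v) x u := by
  have h2 : DifferentiableAt ℝ (fderiv ℝ f) x :=
    ((hf.fderiv_right (m := 1) (WithTop.coe_le_coe.mpr le_top)).differentiable one_ne_zero) x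
  have key : ∀ w : Fin n → ℝ,
      fderiv ℝ (fun y => fderiv ℝ f y w) x = (fderiv ℝ (fderiv ℝ f) x).flip w := by
    intro w
    have := fderiv_clm_apply h2 (differentiableAt_const w)
    simpa using this
  rw [key u, key v]
  simp only [ContinuousLinearMap.flip_apply]
  exact second_derivative_symmetric (fun y => ((hf.differentiable (by simp)) y).hasFDerivAt)
    h2.hasFDerivAt v u

theorem isotropy_second_derivative_identity
    (n : ℕ) (hn : 2 ≤ n)
    (M : (Fin n → ℝ) → (Fin n → ℝ)) (hM : ContDiff ℝ (⊤ : ℕ∞) M)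
    (l : (Fin n → ℝ) → ℝ) (hl : ContDiff ℝ (⊤ : ℕ∞) l) (hlpos : ∀ x, 0 < l x)
    (hiso : ∀ (x : Fin n → ℝ) (j k : Fin n),
      ∑ i : Fin n, fderiv ℝ (fun y => M y i) x (Pi.single j 1)
          * fderiv ℝ (fun y => M y i) x (Pi.single k 1)
        = (l x) ^ 2 * (if j = k then 1 else 0)) :
    ∀ (x : Fin n → ℝ) (j : Fin n),
      ∑ k : Fin n, ∑ i : Fin n,
        fderiv ℝ (fun y => fderiv ℝ (fun z => M z i) y (Pi.single k 1)) x (Pi.single k 1)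
          * fderiv ℝ (fun y => M y i) x (Pi.single j 1)
      = (2 - (n : ℝ)) * l x * fderiv ℝ l x (Pi.single j 1) := by
  intro x j
  set f : Fin n → (Fin n → ℝ) → ℝ := fun i y => M y i with hf
  have hfi : ∀ i, ContDiff ℝ (⊤ : ℕ∞) (f i) := fun i =>
    (ContinuousLinearMap.proj (R := ℝ) (φ := fun _ : Fin n => ℝ) i).contDiff.comp hM
  set g : Fin n → Fin n → (Fin n → ℝ) → ℝ :=
    fun i k y => fderiv ℝ (f i) y (Pi.single k 1) with hg
  have hgi : ∀ i k, ContDiff ℝ (⊤ : ℕ∞) (g i k) := fun i k => dir_smooth (f i) (hfi i) _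
  -- differentiated orthogonality relations
  have key : ∀ a b m : Fin n, ∑ i : Fin n,
      (fderiv ℝ (g i a) x (Pi.single m 1) * g i b x
        + g i a x * fderiv ℝ (g i b) x (Pi.single m 1))
      = 2 * l x * fderiv ℝ l x (Pi.single m 1) * (if a = b then 1 else 0) := by
    intro a b m
    have hFG : (fun y => ∑ i : Fin n, g i a y * g i b y)
        = (fun y => l y * l y * (if a = b then 1 else 0)) := by
      funext y
      have := hiso y a b
      simpa [hg, hf, pow_two] using this
    have e1 : fderiv ℝ (fun y => ∑ i : Fin n, g i a y * g i b y) x (Pi.single m 1)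
        = fderiv ℝ (fun y => l y * l y * (if a = b then 1 else 0)) x (Pi.single m 1) := by
      rw [hFG]
    have hga : ∀ i c, DifferentiableAt ℝ (g i c) x :=
      fun i c => ((hgi i c).differentiable (by simp)) x
    have hld : DifferentiableAt ℝ l x := (hl.differentiable (by simp)) x
    have eL : fderiv ℝ (fun y => ∑ i : Fin n, g i a y * g i b y) x (Pi.single m 1)
        = ∑ i : Fin n, (fderiv ℝ (g i a) x (Pi.single m 1) * g i b x
            + g i a x * fderiv ℝ (g i b) x (Pi.single m 1)) := by
      rw [fderiv_fun_sum (fun i _ => (hga i a).fun_mul (hga i b))]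
      rw [ContinuousLinearMap.sum_apply]
      refine Finset.sum_congr rfl fun i _ => ?_
      rw [fderiv_fun_mul (hga i a) (hga i b)]
      simp [mul_comm]
      ring
    have eR : fderiv ℝ (fun y => l y * l y * (if a = b then 1 else 0)) x (Pi.single m 1)
        = 2 * l x * fderiv ℝ l x (Pi.single m 1) * (if a = b then 1 else 0) := by
      rw [fderiv_mul_const (hld.fun_mul hld), fderiv_fun_mul hld hld]
      split_ifs <;> simp <;> ring
    rw [← eL, e1, eR]
  -- symmetry of second derivatives
  have hswap : ∀ (i a b : Fin n), fderiv ℝ (g i a) x (Pi.single b 1)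
      = fderiv ℝ (g i b) x (Pi.single a 1) :=
    fun i a b => swap_second (f i) (hfi i) x (Pi.single a 1) (Pi.single b 1)
  -- first consequence : (∂_j ∂_k M)ᵀ (∂_k M) = λ ∂_j λ
  have hA : ∀ k : Fin n, ∑ i : Fin n, fderiv ℝ (g i k) x (Pi.single j 1) * g i k x
      = l x * fderiv ℝ l x (Pi.single j 1) := by
    intro k
    have h := key k k j
    simp only [eq_self_iff_true, if_true, mul_one] at h
    have h2 : (2:ℝ) * ∑ i : Fin n, fderiv ℝ (g i k) x (Pi.single j 1) * g i k x
        = 2 * (l x * fderiv ℝ l x (Pi.single j 1)) := by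
      calc (2:ℝ) * ∑ i : Fin n, fderiv ℝ (g i k) x (Pi.single j 1) * g i k x
          = ∑ i : Fin n, (fderiv ℝ (g i k) x (Pi.single j 1) * g i k x
            + g i k x * fderiv ℝ (g i k) x (Pi.single j 1)) := by
            rw [Finset.mul_sum]; exact Finset.sum_congr rfl fun i _ => by ring
        _ = 2 * (l x * fderiv ℝ l x (Pi.single j 1)) := by rw [h]; ring
    linarith
  -- second consequence
  have hB : ∀ k : Fin n, ∑ i : Fin n, fderiv ℝ (g i k) x (Pi.single k 1) * g i j x
      = 2 * l x * fderiv ℝ l x (Pi.single k 1) * (if j = k then 1 else 0)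
        - l x * fderiv ℝ l x (Pi.single j 1) := by
    intro k
    have h := key j k k
    have hr : ∀ i : Fin n, fderiv ℝ (g i j) x (Pi.single k 1) * g i k x
        + g i j x * fderiv ℝ (g i k) x (Pi.single k 1)
        = fderiv ℝ (g i k) x (Pi.single j 1) * g i k x
        + fderiv ℝ (g i k) x (Pi.single k 1) * g i j x := by
      intro i; rw [hswap i j k]; ring
    rw [Finset.sum_congr rfl (fun i _ => hr i), Finset.sum_add_distrib, hA k] at h
    linarith [h]
  calc ∑ k : Fin n, ∑ i : Fin n,
        fderiv ℝ (fun y => fderiv ℝ (fun z => M z i) y (Pi.single k 1)) x (Pi.single k 1)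
          * fderiv ℝ (fun y => M y i) x (Pi.single j 1)
      = ∑ k : Fin n, (2 * l x * fderiv ℝ l x (Pi.single k 1) * (if j = k then 1 else 0)
          - l x * fderiv ℝ l x (Pi.single j 1)) :=
        Finset.sum_congr rfl fun k _ => hB k
    _ = (2 - (n : ℝ)) * l x * fderiv ℝ l x (Pi.single j 1) := by
        rw [Finset.sum_sub_distrib]
        simp only [mul_ite, mul_one, mul_zero, Finset.sum_ite_eq, Finset.mem_univ, if_true,
          Finset.sum_const, Finset.card_univ, Fintype.card_fin, nsmul_eq_mul]
        ring
end
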